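/- Let (Z,≤) index filtered spectra as functors from the poset of integers, and define the Day convolution smash product so that (X_* ∧ Y_*)_n = colim over the zigzag of X_i ∧ Y_j with i + j ≤ n. Then the associated graded functor Gr, defined by Gr_n(X_*) = X_n / X_{n-1} (point-set cofiber/quotient), is strong symmetric monoidal: there is a natural isomorphism Gr(X_* ∧ Y_*) ≅ Gr(X_*) ∧ Gr(Y_*), where the graded smash product is (A_* ∧ B_*)_n = ⊕_{i+j=n} A_i ∧ B_j. -/

import Mathlib

/-!
The comparison map sends the class of `x ⊗ y` to `[x] ⊗ [y]`: the convolution relations and the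
image of `(X ⊛ Y)_{n-1}` are spanned by tensors involving a structure map, which vanishes in
`Gr X` or `Gr Y`. Conversely, the quotient map `Xᵢ ⊗ Yⱼ → Gr(X ⊛ Y)ₙ` kills `Xᵢ ⊗ g(Y_{j-1})`,
which lies in the image of `(X ⊛ Y)_{n-1}`, and `f(X_{i-1}) ⊗ Yⱼ`, which the convolution relation
moves into `X_{i-1} ⊗ g(Yⱼ)`. Since `(M ⧸ m) ⊗ (N ⧸ n) = (M ⊗ N) ⧸ (m ⊗ N + M ⊗ n)`, it descends
to `Gr_i X ⊗ Gr_j Y`, and the two maps are inverse to each other on generators.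
-/

open TensorProduct DirectSum

noncomputable section
namespace Stmt10

variable (R : Type) [CommRing R]
variable (X Y : ℤ → Type)
variable [∀ i, AddCommGroup (X i)] [∀ i, Module R (X i)]
variable [∀ i, AddCommGroup (Y i)] [∀ i, Module R (Y i)]
variable (f : ∀ i j : ℤ, i + 1 = j → (X i →ₗ[R] X j))
variable (g : ∀ i j : ℤ, i + 1 = j → (Y i →ₗ[R] Y j))

/-- The index set for degree `n` of the Day convolution: pairs `(i,j)` with `i + j = n`. -/
abbrev CIdx (n : ℤ) : Type := {p : ℤ × ℤ // p.1 + p.2 = n}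

/-- The direct sum `⊕_{i+j=n} Xᵢ ⊗ Yⱼ`, of which degree `n` of the Day convolution is a
quotient. -/
abbrev ConvSum (n : ℤ) : Type :=
  DirectSum (CIdx n) (fun p => X p.1.1 ⊗[R] Y p.1.2)

/-- The canonical inclusion of the `(i,j)` summand. -/
abbrev convLof (n : ℤ) (p : CIdx n) :
    (X p.1.1 ⊗[R] Y p.1.2) →ₗ[R] ConvSum R X Y n :=
  DirectSum.lof R (CIdx n) (fun q => X q.1.1 ⊗[R] Y q.1.2) p

/-- The relations presenting `(X ⊛ Y)ₙ = colim_{i+j≤n} Xᵢ ⊗ Yⱼ` as a quotient of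
`⊕_{i+j=n} Xᵢ ⊗ Yⱼ`: for `i + j = n - 1`, the images of `x ⊗ y ∈ Xᵢ ⊗ Yⱼ` under the two
structure maps are identified. -/
def ConvRel (n : ℤ) : Submodule R (ConvSum R X Y n) :=
  Submodule.span R {z | ∃ (i j : ℤ) (hij : i + j + 1 = n) (x : X i) (y : Y j),
    z = convLof R X Y n ⟨(i, j + 1), by omega⟩ (x ⊗ₜ[R] g j (j + 1) rfl y)
      - convLof R X Y n ⟨(i + 1, j), by omega⟩ (f i (i + 1) rfl x ⊗ₜ[R] y)}

/-- Degree `n` of the Day convolution `X ⊛ Y`. -/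
abbrev Conv (n : ℤ) : Type := ConvSum R X Y n ⧸ ConvRel R X Y f g n

/-- The image of the structure map `(X ⊛ Y)_{n-1} → (X ⊛ Y)ₙ` of the convolution. -/
def ConvIm (n : ℤ) : Submodule R (Conv R X Y f g n) :=
  Submodule.span R {w | ∃ (i j : ℤ) (hij : i + j + 1 = n) (x : X i) (y : Y j),
    w = Submodule.Quotient.mk
      (convLof R X Y n ⟨(i, j + 1), by omega⟩ (x ⊗ₜ[R] g j (j + 1) rfl y))}

/-- The associated graded `Gr_n(X ⊛ Y) = (X ⊛ Y)ₙ / (X ⊛ Y)_{n-1}`. -/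
abbrev GrConv (n : ℤ) : Type := Conv R X Y f g n ⧸ ConvIm R X Y f g n

/-- The associated graded `Gr_i(X) = Xᵢ / X_{i-1}`. -/
abbrev GrX (i : ℤ) : Type := X i ⧸ LinearMap.range (f (i - 1) i (by omega))

/-- The associated graded `Gr_j(Y) = Yⱼ / Y_{j-1}`. -/
abbrev GrY (j : ℤ) : Type := Y j ⧸ LinearMap.range (g (j - 1) j (by omega))

/-- Degree `n` of the graded (Day convolution) product
`(Gr X ⊛ Gr Y)ₙ = ⊕_{i+j=n} Gr_i(X) ⊗ Gr_j(Y)`. -/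
abbrev GrTensor (n : ℤ) : Type :=
  DirectSum (CIdx n) (fun p => GrX R X f p.1.1 ⊗[R] GrY R Y g p.1.2)

/-- The canonical inclusion of the `(i,j)` summand of the graded product. -/
abbrev grLof (n : ℤ) (p : CIdx n) :
    (GrX R X f p.1.1 ⊗[R] GrY R Y g p.1.2) →ₗ[R] GrTensor R X Y f g n :=
  DirectSum.lof R (CIdx n) (fun q => GrX R X f q.1.1 ⊗[R] GrY R Y g q.1.2) p

section

variable {R M N P : Type*} [CommRing R] [AddCommGroup M] [Module R M] [AddCommGroup N]
  [Module R N] [AddCommGroup P] [Module R P]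

def quotientTensorQuotientLift (m : Submodule R M) (n : Submodule R N)
    (φ : M ⊗[R] N →ₗ[R] P) (hm : ∀ x ∈ m, ∀ y, φ (x ⊗ₜ y) = 0)
    (hn : ∀ x, ∀ y ∈ n, φ (x ⊗ₜ y) = 0) : (M ⧸ m) ⊗[R] (N ⧸ n) →ₗ[R] P :=
  Submodule.liftQ _ φ (sup_le
      (LinearMap.range_le_ker_iff.2 <| TensorProduct.ext' fun x y => by simpa using hm x x.2 y)
      (LinearMap.range_le_ker_iff.2 <| TensorProduct.ext' fun x y => by simpa using hn x y y.2)) ∘ₗ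
    (quotientTensorQuotientEquiv m n).toLinearMap

@[simp]
theorem quotientTensorQuotientLift_mk_tmul_mk (m : Submodule R M) (n : Submodule R N)
    (φ : M ⊗[R] N →ₗ[R] P) (hm : ∀ x ∈ m, ∀ y, φ (x ⊗ₜ y) = 0)
    (hn : ∀ x, ∀ y ∈ n, φ (x ⊗ₜ y) = 0) (x : M) (y : N) :
    quotientTensorQuotientLift m n φ hm hn
      (Submodule.Quotient.mk x ⊗ₜ Submodule.Quotient.mk y) = φ (x ⊗ₜ y) :=
  rfl

end

section

variable {R X Y f g}

theorem grX_mk_apply_eq_zero {a i : ℤ} (ha : a + 1 = i) (x : X a) :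
    (Submodule.Quotient.mk (f a i ha x) : GrX R X f i) = 0 := by
  obtain rfl : a = i - 1 := by omega
  exact (Submodule.Quotient.mk_eq_zero _).2 ⟨x, rfl⟩

variable (f g)

def sumToGrTensor (n : ℤ) : ConvSum R X Y n →ₗ[R] GrTensor R X Y f g n :=
  DirectSum.toModule R (CIdx n) _ fun p =>
    grLof R X Y f g n p ∘ₗ TensorProduct.map (Submodule.mkQ _) (Submodule.mkQ _)

theorem sumToGrTensor_lof_tmul {n : ℤ} (p : CIdx n) (x : X p.1.1) (y : Y p.1.2) :
    sumToGrTensor f g n (convLof R X Y n p (x ⊗ₜ y)) =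
      grLof R X Y f g n p (Submodule.Quotient.mk x ⊗ₜ Submodule.Quotient.mk y) := by
  simp [sumToGrTensor]

theorem convRel_le_ker_sumToGrTensor (n : ℤ) :
    ConvRel R X Y f g n ≤ LinearMap.ker (sumToGrTensor f g n) := by
  rw [ConvRel, Submodule.span_le]
  rintro _ ⟨i, j, -, x, y, rfl⟩
  simp only [SetLike.mem_coe, LinearMap.mem_ker, map_sub, sumToGrTensor_lof_tmul,
    grX_mk_apply_eq_zero, tmul_zero, zero_tmul, map_zero, sub_zero]

def convToGrTensor (n : ℤ) : Conv R X Y f g n →ₗ[R] GrTensor R X Y f g n :=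
  (ConvRel R X Y f g n).liftQ (M₂ := GrTensor R X Y f g n) (sumToGrTensor f g n)
    (convRel_le_ker_sumToGrTensor f g n)

theorem convIm_le_ker_convToGrTensor (n : ℤ) :
    ConvIm R X Y f g n ≤ LinearMap.ker (convToGrTensor f g n) := by
  rw [ConvIm, Submodule.span_le]
  rintro _ ⟨i, j, -, x, y, rfl⟩
  simp only [SetLike.mem_coe, LinearMap.mem_ker, convToGrTensor, Submodule.liftQ_apply,
    sumToGrTensor_lof_tmul, grX_mk_apply_eq_zero, tmul_zero, map_zero]

def grConvToGrTensor (n : ℤ) : GrConv R X Y f g n →ₗ[R] GrTensor R X Y f g n :=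
  (ConvIm R X Y f g n).liftQ (M₂ := GrTensor R X Y f g n) (convToGrTensor f g n)
    (convIm_le_ker_convToGrTensor f g n)

theorem grConvToGrTensor_mk_mk_lof_tmul {n : ℤ} (p : CIdx n) (x : X p.1.1) (y : Y p.1.2) :
    grConvToGrTensor f g n
        (Submodule.Quotient.mk (Submodule.Quotient.mk (convLof R X Y n p (x ⊗ₜ y)))) =
      grLof R X Y f g n p (Submodule.Quotient.mk x ⊗ₜ Submodule.Quotient.mk y) :=
  sumToGrTensor_lof_tmul f g p x y

def grConvMk (n : ℤ) (p : CIdx n) : X p.1.1 ⊗[R] Y p.1.2 →ₗ[R] GrConv R X Y f g n :=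
  (ConvIm R X Y f g n).mkQ ∘ₗ (ConvRel R X Y f g n).mkQ ∘ₗ convLof R X Y n p

theorem grConvMk_tmul_apply_eq_zero {n : ℤ} (p : CIdx n) {a : ℤ} (ha : a + 1 = p.1.2)
    (x : X p.1.1) (y : Y a) : grConvMk f g n p (x ⊗ₜ g a p.1.2 ha y) = 0 := by
  obtain ⟨⟨i, j⟩, hp⟩ := p
  obtain rfl : j = a + 1 := ha.symm
  exact (Submodule.Quotient.mk_eq_zero _).2 (Submodule.subset_span ⟨i, a, by omega, x, y, rfl⟩)

theorem grConvMk_apply_tmul_eq_zero {n : ℤ} (p : CIdx n) {a : ℤ} (ha : a + 1 = p.1.1)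
    (x : X a) (y : Y p.1.2) : grConvMk f g n p (f a p.1.1 ha x ⊗ₜ y) = 0 := by
  obtain ⟨⟨i, j⟩, hp⟩ := p
  obtain rfl : i = a + 1 := ha.symm
  have hrel : (Submodule.Quotient.mk (convLof R X Y n ⟨(a, j + 1), by omega⟩
        (x ⊗ₜ g j (j + 1) rfl y)) : Conv R X Y f g n) =
      Submodule.Quotient.mk (convLof R X Y n ⟨(a + 1, j), hp⟩ (f a (a + 1) rfl x ⊗ₜ y)) :=
    (Submodule.Quotient.eq _).2 (Submodule.subset_span ⟨a, j, by omega, x, y, rfl⟩)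
  simpa [grConvMk, ← hrel] using grConvMk_tmul_apply_eq_zero f g ⟨(a, j + 1), by omega⟩ rfl x y

def grTensorToGrConv (n : ℤ) : GrTensor R X Y f g n →ₗ[R] GrConv R X Y f g n :=
  DirectSum.toModule R (CIdx n) _ fun p =>
    quotientTensorQuotientLift _ _ (grConvMk f g n p)
      (by rintro _ ⟨x, rfl⟩ y; exact grConvMk_apply_tmul_eq_zero f g p _ x y)
      (by rintro x _ ⟨y, rfl⟩; exact grConvMk_tmul_apply_eq_zero f g p _ x y)

theorem grTensorToGrConv_lof_mk_tmul_mk {n : ℤ} (p : CIdx n) (x : X p.1.1) (y : Y p.1.2) :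
    grTensorToGrConv f g n
        (grLof R X Y f g n p (Submodule.Quotient.mk x ⊗ₜ Submodule.Quotient.mk y)) =
      Submodule.Quotient.mk (Submodule.Quotient.mk (convLof R X Y n p (x ⊗ₜ y))) := by
  simp [grTensorToGrConv, grConvMk]

def grConvEquivGrTensor (n : ℤ) : GrConv R X Y f g n ≃ₗ[R] GrTensor R X Y f g n :=
  LinearEquiv.ofLinearMap (grConvToGrTensor f g n) (grTensorToGrConv f g n)
    (by
      refine DirectSum.linearMap_ext _ fun p => TensorProduct.ext' fun x y => ?_
      induction x using Submodule.Quotient.induction_on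
      induction y using Submodule.Quotient.induction_on
      simp [grTensorToGrConv_lof_mk_tmul_mk, grConvToGrTensor_mk_mk_lof_tmul])
    (by
      ext p x y
      simp [grTensorToGrConv_lof_mk_tmul_mk, grConvToGrTensor_mk_mk_lof_tmul])

end

/-- The associated graded functor `Gr` (point-set cokernel of the structure maps) is
strong symmetric monoidal for the Day convolution of `ℤ`-indexed filtered modules: for
filtered modules `X_*`, `Y_*` there is a natural isomorphism
`Gr(X ⊛ Y) ≅ Gr(X) ⊛ Gr(Y)`, where `(A ⊛ B)ₙ = ⊕_{i+j=n} Aᵢ ⊗ Bⱼ` on graded objects; it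
is the canonical comparison map, sending the class of `x ⊗ y ∈ Xᵢ ⊗ Yⱼ` (`i + j = n`) to
`[x] ⊗ [y] ∈ Gr_i(X) ⊗ Gr_j(Y)`. -/
theorem stmt10 : ∀ n : ℤ, ∃ e : GrConv R X Y f g n ≃ₗ[R] GrTensor R X Y f g n,
    ∀ (i j : ℤ) (h : i + j = n) (x : X i) (y : Y j),
      e (Submodule.Quotient.mk (Submodule.Quotient.mk
            (convLof R X Y n ⟨(i, j), h⟩ (x ⊗ₜ[R] y))))
        = grLof R X Y f g n ⟨(i, j), h⟩
            ((Submodule.Quotient.mk x : GrX R X f i) ⊗ₜ[R]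
              (Submodule.Quotient.mk y : GrY R Y g j)) :=
  fun n => ⟨grConvEquivGrTensor f g n, fun i j h x y =>
    grConvToGrTensor_mk_mk_lof_tmul f g ⟨(i, j), h⟩ x y⟩

end Stmt10
end
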